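/- Rigidity theorem for the 3-diagonal map on octagons with 4-fold rotational symmetry: suppose (x,y) ∈ ℝ² and there exists a bi-infinite sequence (p_j)_{j∈ℤ} of points of ℝ² with p_0 = (x,y) such that, for every j ∈ ℤ, T is defined at p_j, T(p_j) = p_{j+1}, and P(p_j) is convex. Then (x,y) = (1/√2, 1/√2), i.e. P(x,y) is the regular octagon. Conversely, (1/√2, 1/√2) is a fixed point of T and P(1/√2, 1/√2) is convex. -/

import Mathlib

/-!
Write `s = x + y`, `d = x - y`, `q = x² + y²`; then `P(x,y)` is convex iff `1 < s` and `q < s`.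
Along the map, `(q' - 1)(1 + s) = -(q - 1)(s' - 1)`, so on a convex orbit `|q - 1|` at least halves
at every step; as it is bounded, following the orbit backwards shows `q = 1` everywhere.
On the unit circle `d' (3 - 2s) = -d`, and convexity of the next octagon forces `|d| < 1/5`,
hence `3 - 2s < 1/5` and `|d'| ≥ 5 |d|`; as `|d| < 1`, following the orbit forwards gives `d = 0`.
-/

/-- Denominator whose nonvanishing defines the domain of the 3-diagonal map `T`. -/
noncomputable def tDen (x y : ℝ) : ℝ :=
  (1 + (x + y)) *
    ((x ^ 2 + y ^ 2) + 2 * (x ^ 3 + y ^ 3) + (x ^ 4 + y ^ 4)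
      - 2 * (x * y) - 2 * (x * y ^ 2 + y * x ^ 2) + 2 * (x ^ 2 * y ^ 2))

/-- The coefficient `A` of the 3-diagonal pentagram map. -/
noncomputable def tA (x y : ℝ) : ℝ := ((x + y) + (x ^ 2 + y ^ 2)) / tDen x y

/-- The quantity `B` of the 3-diagonal pentagram map. -/
noncomputable def tB (x y : ℝ) : ℝ :=
  (x - y) + 2 * (x ^ 2 - y ^ 2) + (x ^ 3 - y ^ 3) + (x * y ^ 2 - y * x ^ 2)

/-- The 3-diagonal pentagram map on octagons with 4-fold rotational symmetry,
in coordinates: `T(x,y) = (-Ax(B - 2xy), Ay(B + 2xy))`. -/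
noncomputable def T (p : ℝ × ℝ) : ℝ × ℝ :=
  (-(tA p.1 p.2) * p.1 * (tB p.1 p.2 - 2 * p.1 * p.2),
    (tA p.1 p.2) * p.2 * (tB p.1 p.2 + 2 * p.1 * p.2))

/-- The vertices of the octagon `P(x,y)` with 4-fold rotational symmetry. -/
def octVerts (x y : ℝ) : Fin 8 → ℝ × ℝ :=
  ![(1, 0), (x, y), (0, 1), (-y, x), (-1, 0), (-x, -y), (0, -1), (y, -x)]

/-- Cross product (2x2 determinant) of two planar vectors. -/
def cross2 (a b : ℝ × ℝ) : ℝ := a.1 * b.2 - a.2 * b.1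

/-- The octagon `P(x,y)` is convex: each successive cross product is positive. -/
def ConvexOct (x y : ℝ) : Prop :=
  ∀ i : Fin 8,
    0 < cross2 (octVerts x y (i + 1) - octVerts x y i)
        (octVerts x y (i + 2) - octVerts x y (i + 1))

theorem eq_zero_of_abs_le_of_abs_succ_le_mul {a : ℤ → ℝ} {c M : ℝ} (hc0 : 0 ≤ c)
    (hc : c < 1) (hM : ∀ j, |a j| ≤ M) (h : ∀ j, |a (j + 1)| ≤ c * |a j|) (k : ℤ) :
    a k = 0 := by
  have hpow : ∀ n : ℕ, ∀ j, |a j| ≤ c ^ n * M := by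
    intro n
    induction n with
    | zero => simpa using hM
    | succ n ih =>
      intro j
      calc |a j| = |a (j - 1 + 1)| := by rw [sub_add_cancel]
        _ ≤ c * |a (j - 1)| := h _
        _ ≤ c * (c ^ n * M) := mul_le_mul_of_nonneg_left (ih _) hc0
        _ = c ^ (n + 1) * M := by ring
  have hlim : Filter.Tendsto (fun n : ℕ => c ^ n * M) Filter.atTop (nhds 0) := by
    simpa using (tendsto_pow_atTop_nhds_zero_of_lt_one hc0 hc).mul_const M
  exact abs_nonpos_iff.1 (ge_of_tendsto' hlim fun n => hpow n k)

lemma convexOct_iff (x y : ℝ) :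
    ConvexOct x y ↔ 1 < x + y ∧ x ^ 2 + y ^ 2 < x + y := by
  constructor
  · intro h
    have h0 : 0 < (x - 1) * (1 - y) - (y - 0) * (0 - x) := h 0
    have h1 : 0 < (0 - x) * (x - 1) - (1 - y) * (-y - 0) := h 1
    constructor <;> nlinarith
  · rintro ⟨h1, h2⟩ i
    fin_cases i <;> simp [octVerts, cross2] <;> nlinarith

namespace ConvexOct

variable {x y : ℝ}

lemma abs_sq_add_sq_sub_one_le (h : ConvexOct x y) : |x ^ 2 + y ^ 2 - 1| ≤ 1 := by
  obtain ⟨h1, h2⟩ := (convexOct_iff x y).1 h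
  rw [abs_le]
  constructor <;> nlinarith [sq_nonneg (x - y)]

lemma one_lt_add (h : ConvexOct x y) : 1 < x + y := ((convexOct_iff x y).1 h).1

lemma add_lt_two (h : ConvexOct x y) : x + y < 2 := by
  obtain ⟨h1, h2⟩ := (convexOct_iff x y).1 h
  nlinarith [sq_nonneg (x - y)]

lemma abs_sub_lt_one (h : ConvexOct x y) : |x - y| < 1 := by
  obtain ⟨h1, h2⟩ := (convexOct_iff x y).1 h
  rw [← sq_lt_one_iff_abs_lt_one]
  nlinarith [sq_nonneg (x + y - 1)]

end ConvexOct

lemma T_sq_add_sq_sub_one_mul {p : ℝ × ℝ} (hD : tDen p.1 p.2 ≠ 0) :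
    ((T p).1 ^ 2 + (T p).2 ^ 2 - 1) * (1 + (p.1 + p.2)) =
      -(p.1 ^ 2 + p.2 ^ 2 - 1) * ((T p).1 + (T p).2 - 1) := by
  unfold T tA tB
  field_simp
  unfold tDen
  ring

lemma T_fst_sub_snd_mul_tDen {p : ℝ × ℝ} (hD : tDen p.1 p.2 ≠ 0) :
    ((T p).1 - (T p).2) * tDen p.1 p.2 =
      -(p.1 - p.2) * (1 + (p.1 + p.2)) * ((p.1 + p.2) + (p.1 ^ 2 + p.2 ^ 2)) ^ 2 := by
  unfold T tA tB
  field_simp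
  ring

lemma tDen_of_sq_add_sq_eq_one {x y : ℝ} (h : x ^ 2 + y ^ 2 = 1) :
    tDen x y = (1 + (x + y)) ^ 3 * (3 - 2 * (x + y)) := by
  unfold tDen
  linear_combination (1 + (x + y)) * (x ^ 2 + y ^ 2 + 4 * (x + y) + 3) * h

lemma T_fst_sub_snd_mul_of_sq_add_sq_eq_one {p : ℝ × ℝ} (hD : tDen p.1 p.2 ≠ 0)
    (h : p.1 ^ 2 + p.2 ^ 2 = 1) :
    ((T p).1 - (T p).2) * (3 - 2 * (p.1 + p.2)) = -(p.1 - p.2) := by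
  have key := T_fst_sub_snd_mul_tDen hD
  rw [tDen_of_sq_add_sq_eq_one h] at hD key
  apply mul_left_cancel₀ (left_ne_zero_of_mul hD)
  linear_combination
    key - (p.1 - p.2) * (1 + (p.1 + p.2)) * (p.1 ^ 2 + p.2 ^ 2 + 1 + 2 * (p.1 + p.2)) * h

section Orbit

variable {p : ℝ × ℝ} (hD : tDen p.1 p.2 ≠ 0) (hp : ConvexOct p.1 p.2)
  (hTp : ConvexOct (T p).1 (T p).2)
include hD hp hTp

lemma abs_T_sq_add_sq_sub_one_le :
    |(T p).1 ^ 2 + (T p).2 ^ 2 - 1| ≤ 1 / 2 * |p.1 ^ 2 + p.2 ^ 2 - 1| := by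
  have key := congrArg abs (T_sq_add_sq_sub_one_mul hD)
  have hs := hp.one_lt_add
  have hs' := hTp.add_lt_two
  rw [abs_mul, abs_mul, abs_neg, abs_of_pos (by linarith : 0 < 1 + (p.1 + p.2)),
    abs_of_pos (by linarith [hTp.one_lt_add] : 0 < (T p).1 + (T p).2 - 1)] at key
  nlinarith [abs_nonneg ((T p).1 ^ 2 + (T p).2 ^ 2 - 1), abs_nonneg (p.1 ^ 2 + p.2 ^ 2 - 1)]

lemma five_mul_abs_sub_le_abs_T_sub (h : p.1 ^ 2 + p.2 ^ 2 = 1) :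
    5 * |p.1 - p.2| ≤ |(T p).1 - (T p).2| := by
  have key := congrArg abs (T_fst_sub_snd_mul_of_sq_add_sq_eq_one hD h)
  have hs := hp.one_lt_add
  have hd' := hTp.abs_sub_lt_one
  have hcirc : (p.1 + p.2) ^ 2 + |p.1 - p.2| ^ 2 = 2 := by
    rw [sq_abs]; linear_combination 2 * h
  have hpos : 0 < 3 - 2 * (p.1 + p.2) := by nlinarith [abs_nonneg (p.1 - p.2)]
  rw [abs_mul, abs_neg, abs_of_pos hpos] at key
  -- `|d| < 3 - 2s` together with `s² + d² = 2` forces `(5|d| - 1)(|d| - 1) > 0`.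
  have hd : |p.1 - p.2| < 1 / 5 := by
    nlinarith [abs_nonneg ((T p).1 - (T p).2), abs_nonneg (p.1 - p.2), hp.abs_sub_lt_one]
  have hsmall : 3 - 2 * (p.1 + p.2) < 1 / 5 := by nlinarith [abs_nonneg (p.1 - p.2)]
  nlinarith [abs_nonneg ((T p).1 - (T p).2)]

end Orbit

section Diagonal

variable {a : ℝ} (ha : 2 * a ^ 2 = 1)
include ha

lemma tDen_diag_ne_zero : tDen a a ≠ 0 := by
  rw [tDen_of_sq_add_sq_eq_one (by linear_combination ha)]
  have h1 : 1 + (a + a) ≠ 0 := fun h => by nlinarith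
  have h2 : 3 - 2 * (a + a) ≠ 0 := fun h => by nlinarith
  positivity

lemma T_diag : T (a, a) = (a, a) := by
  have hD := tDen_diag_ne_zero ha
  have hA : tA a a = 1 := by
    rw [tA, div_eq_one_iff_eq hD, tDen_of_sq_add_sq_eq_one (by linear_combination ha)]
    linear_combination (16 * a ^ 2 + 12 * a + 3) * ha
  have hB : tB a a = 0 := by unfold tB; ring
  simp only [T, hA, hB, Prod.mk.injEq]
  constructor <;> linear_combination a * ha

lemma convexOct_diag (ha0 : 0 < a) : ConvexOct a a := by
  rw [convexOct_iff]
  constructor <;> nlinarith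

lemma eq_one_div_sqrt_two (ha0 : 0 < a) : a = 1 / √2 := by
  rw [← Real.sqrt_sq ha0.le, one_div, ← Real.sqrt_inv]
  congr 1
  linear_combination ha / 2

end Diagonal

lemma two_mul_one_div_sqrt_two_sq : 2 * (1 / √2 : ℝ) ^ 2 = 1 := by
  rw [div_pow, Real.sq_sqrt zero_le_two]
  norm_num

theorem orbit_zero_eq_of_convexOct {p : ℤ → ℝ × ℝ} (hD : ∀ j, tDen (p j).1 (p j).2 ≠ 0)
    (hT : ∀ j, T (p j) = p (j + 1)) (hC : ∀ j, ConvexOct (p j).1 (p j).2) :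
    p 0 = (1 / √2, 1 / √2) := by
  have hTC : ∀ j, ConvexOct (T (p j)).1 (T (p j)).2 := fun j => hT j ▸ hC (j + 1)
  have hcirc (j : ℤ) : (p j).1 ^ 2 + (p j).2 ^ 2 = 1 := sub_eq_zero.1 <|
    eq_zero_of_abs_le_of_abs_succ_le_mul (a := fun j => (p j).1 ^ 2 + (p j).2 ^ 2 - 1)
      (by norm_num) (by norm_num) (fun j => (hC j).abs_sq_add_sq_sub_one_le)
      (fun j => hT j ▸ abs_T_sq_add_sq_sub_one_le (hD j) (hC j) (hTC j)) j
  have hexpand (j : ℤ) :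
      |(p (-(j + 1))).1 - (p (-(j + 1))).2| ≤ 1 / 5 * |(p (-j)).1 - (p (-j)).2| := by
    have h := five_mul_abs_sub_le_abs_T_sub (hD _) (hC _) (hTC _) (hcirc (-(j + 1)))
    rw [hT, show -(j + 1) + 1 = -j by ring] at h
    linarith
  have hdiag : (p 0).1 = (p 0).2 := sub_eq_zero.1 <| by
    simpa using eq_zero_of_abs_le_of_abs_succ_le_mul (a := fun j => (p (-j)).1 - (p (-j)).2)
      (by norm_num) (by norm_num) (fun j => (hC _).abs_sub_lt_one.le) hexpand 0
  have hpos : 0 < (p 0).1 := by linarith [(hC 0).one_lt_add]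
  have hsq : 2 * (p 0).1 ^ 2 = 1 := by linear_combination hdiag * ((p 0).1 + (p 0).2) + hcirc 0
  rw [← eq_one_div_sqrt_two hsq hpos]
  exact Prod.ext rfl hdiag.symm

/-- Rigidity: if `P(x,y)` admits a bi-infinite `T`-orbit of convex octagons then
`P(x,y)` is the regular octagon, i.e. `(x,y) = (1/√2, 1/√2)`; conversely
`(1/√2, 1/√2)` is a convex fixed point of `T`. -/
theorem octagon_rigidity :
    (∀ x y : ℝ,
      (∃ p : ℤ → ℝ × ℝ, p 0 = (x, y) ∧
        ∀ j : ℤ, tDen (p j).1 (p j).2 ≠ 0 ∧ T (p j) = p (j + 1) ∧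
          ConvexOct (p j).1 (p j).2) →
      (x, y) = (1 / Real.sqrt 2, 1 / Real.sqrt 2)) ∧
    tDen (1 / Real.sqrt 2) (1 / Real.sqrt 2) ≠ 0 ∧
    T (1 / Real.sqrt 2, 1 / Real.sqrt 2) = (1 / Real.sqrt 2, 1 / Real.sqrt 2) ∧
    ConvexOct (1 / Real.sqrt 2) (1 / Real.sqrt 2) := by
  have ha := two_mul_one_div_sqrt_two_sq
  refine ⟨fun x y ⟨p, hp0, hp⟩ => ?_, tDen_diag_ne_zero ha, T_diag ha,
    convexOct_diag ha (by positivity)⟩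
  rw [← hp0]
  exact orbit_zero_eq_of_convexOct (fun j => (hp j).1) (fun j => (hp j).2.1)
    fun j => (hp j).2.2
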